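/- For every M ∈ Sp₄(ℤ): (i) det(φ(M)) = ν(M)²; (ii) the greatest common divisor of the four entries of φ(M) equals 1; (iii) if M̃ = ((U, B), (0, (Uᵀ)⁻¹)) ∈ Sp₄(ℤ) with U ∈ GL₂(ℤ), then φ(M̃·M) = det(U)·φ(M) and ν(M̃·M) = det(U)·ν(M). -/

import Mathlib

open Matrix

/-- Index type for `4×4` matrices written in `2×2` blocks. -/
abbrev Idx := Fin 2 ⊕ Fin 2

/-- The symplectic form `J = ((0, I₂), (−I₂, 0))` in `2×2` block form. -/
def Jp : Matrix Idx Idx ℤ := Matrix.fromBlocks 0 1 (-1) 0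

/-- `M ∈ Sp₄(ℤ)`, i.e. `Mᵀ · J · M = J`. -/
def IsSp4 (M : Matrix Idx Idx ℤ) : Prop := Mᵀ * Jp * M = Jp

/-- Determinant of the `2×2` matrix with columns `u` and `v`. -/
def dcol (u v : Fin 2 → ℤ) : ℤ := u 0 * v 1 - u 1 * v 0

/-- `φ(M) = ((det(C₁|D₂), det D), (det C, det(D₁|C₂)))` where `C`, `D` are the lower-left
and lower-right `2×2` blocks of `M`, with columns `C₁, C₂` resp. `D₁, D₂`. -/
def phi (M : Matrix Idx Idx ℤ) : Matrix (Fin 2) (Fin 2) ℤ :=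
  !![dcol (fun i => M.toBlocks₂₁ i 0) (fun i => M.toBlocks₂₂ i 1), (M.toBlocks₂₂).det;
     (M.toBlocks₂₁).det, dcol (fun i => M.toBlocks₂₂ i 0) (fun i => M.toBlocks₂₁ i 1)]

/-- `ν(M) = det(C₁|D₁)`. -/
def nu (M : Matrix Idx Idx ℤ) : ℤ :=
  dcol (fun i => M.toBlocks₂₁ i 0) (fun i => M.toBlocks₂₂ i 0)

/- ### Auxiliary lemmas -/

lemma Jp_mul_Jp : Jp * Jp = -1 := by
  simp [Jp, Matrix.fromBlocks_multiply]
  ext (i | i) (j | j) <;> simp [Matrix.fromBlocks, Matrix.one_apply]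

lemma sp4_other {M : Matrix Idx Idx ℤ} (hM : IsSp4 M) : M * Jp * Mᵀ = Jp := by
  have h1 : (-(Jp * Mᵀ * Jp)) * M = 1 := by
    calc (-(Jp * Mᵀ * Jp)) * M = -(Jp * (Mᵀ * Jp * M)) := by noncomm_ring
    _ = -(Jp * Jp) := by rw [hM]
    _ = 1 := by rw [Jp_mul_Jp]; simp
  have h2 : M * (-(Jp * Mᵀ * Jp)) = 1 := mul_eq_one_comm.mp h1
  have h3 : -(M * Jp * Mᵀ) * Jp = 1 := by rw [← h2]; noncomm_ring
  have h4 := mul_eq_one_comm.mp h3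
  have h5 := congrArg (fun X => Jp * X) h4
  simp only [← Matrix.mul_assoc, Jp_mul_Jp] at h5
  simpa using congrArg Neg.neg h5

lemma fin4_mk_two {h} : (⟨2, h⟩ : Fin 4) = 2 := rfl
lemma fin4_mk_three {h} : (⟨3, h⟩ : Fin 4) = 3 := rfl
lemma fin4_val_two : ((2 : Fin 4) : ℕ) = 2 := rfl
lemma fin4_val_three : ((3 : Fin 4) : ℕ) = 3 := rfl

lemma det_fin_four (A : Matrix (Fin 4) (Fin 4) ℤ) : A.det =
    A 0 0 * (A 1 1 * (A 2 2 * A 3 3 - A 2 3 * A 3 2) - A 1 2 * (A 2 1 * A 3 3 - A 2 3 * A 3 1) + A 1 3 * (A 2 1 * A 3 2 - A 2 2 * A 3 1))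
  - A 0 1 * (A 1 0 * (A 2 2 * A 3 3 - A 2 3 * A 3 2) - A 1 2 * (A 2 0 * A 3 3 - A 2 3 * A 3 0) + A 1 3 * (A 2 0 * A 3 2 - A 2 2 * A 3 0))
  + A 0 2 * (A 1 0 * (A 2 1 * A 3 3 - A 2 3 * A 3 1) - A 1 1 * (A 2 0 * A 3 3 - A 2 3 * A 3 0) + A 1 3 * (A 2 0 * A 3 1 - A 2 1 * A 3 0))
  - A 0 3 * (A 1 0 * (A 2 1 * A 3 2 - A 2 2 * A 3 1) - A 1 1 * (A 2 0 * A 3 2 - A 2 2 * A 3 0) + A 1 2 * (A 2 0 * A 3 1 - A 2 1 * A 3 0)) := by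
  simp only [Matrix.det_succ_row_zero, Fin.sum_univ_succ, Matrix.det_unique, Matrix.submatrix_apply,
    Matrix.submatrix_submatrix, Fin.sum_univ_zero, Function.comp]
  norm_num [Fin.succAbove, Fin.lt_def, Fin.castSucc, Fin.castAdd, Fin.castLE, Fin.succ,
    fin4_mk_two, fin4_mk_three, fin4_val_two, fin4_val_three]
  ring

/-- Laplace expansion of a `4×4` determinant along the bottom two rows, written in terms of
`2×2` minors (Plücker coordinates). -/
lemma laplace (A : Matrix Idx Idx ℤ) : A.det =
    (A (.inl 0) (.inr 0) * A (.inl 1) (.inr 1) - A (.inl 0) (.inr 1) * A (.inl 1) (.inr 0)) *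
      (A (.inr 0) (.inl 0) * A (.inr 1) (.inl 1) - A (.inr 0) (.inl 1) * A (.inr 1) (.inl 0))
  - (A (.inl 0) (.inl 1) * A (.inl 1) (.inr 1) - A (.inl 0) (.inr 1) * A (.inl 1) (.inl 1)) *
      (A (.inr 0) (.inl 0) * A (.inr 1) (.inr 0) - A (.inr 0) (.inr 0) * A (.inr 1) (.inl 0))
  + (A (.inl 0) (.inl 1) * A (.inl 1) (.inr 0) - A (.inl 0) (.inr 0) * A (.inl 1) (.inl 1)) *
      (A (.inr 0) (.inl 0) * A (.inr 1) (.inr 1) - A (.inr 0) (.inr 1) * A (.inr 1) (.inl 0))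
  + (A (.inl 0) (.inl 0) * A (.inl 1) (.inr 1) - A (.inl 0) (.inr 1) * A (.inl 1) (.inl 0)) *
      (A (.inr 0) (.inl 1) * A (.inr 1) (.inr 0) - A (.inr 0) (.inr 0) * A (.inr 1) (.inl 1))
  - (A (.inl 0) (.inl 0) * A (.inl 1) (.inr 0) - A (.inl 0) (.inr 0) * A (.inl 1) (.inl 0)) *
      (A (.inr 0) (.inl 1) * A (.inr 1) (.inr 1) - A (.inr 0) (.inr 1) * A (.inr 1) (.inl 1))
  + (A (.inl 0) (.inl 0) * A (.inl 1) (.inl 1) - A (.inl 0) (.inl 1) * A (.inl 1) (.inl 0)) *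
      (A (.inr 0) (.inr 0) * A (.inr 1) (.inr 1) - A (.inr 0) (.inr 1) * A (.inr 1) (.inr 0)) := by
  rw [← Matrix.det_reindex_self finSumFinEquiv A, det_fin_four]
  simp only [Matrix.reindex_apply, Matrix.submatrix_apply,
    show (finSumFinEquiv (m:=2) (n:=2)).symm (0:Fin 4) = Sum.inl 0 by decide,
    show (finSumFinEquiv (m:=2) (n:=2)).symm (1:Fin 4) = Sum.inl 1 by decide,
    show (finSumFinEquiv (m:=2) (n:=2)).symm (2:Fin 4) = Sum.inr 0 by decide,
    show (finSumFinEquiv (m:=2) (n:=2)).symm (3:Fin 4) = Sum.inr 1 by decide]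
  ring

lemma det_Jp : Jp.det = 1 := by
  rw [laplace]
  norm_num [Jp, Matrix.fromBlocks, Matrix.one_apply]

lemma sp4_det {M : Matrix Idx Idx ℤ} (hM : IsSp4 M) : M.det = 1 ∨ M.det = -1 := by
  have h := congrArg Matrix.det hM
  rw [Matrix.det_mul, Matrix.det_mul, Matrix.det_transpose, det_Jp] at h
  have h2 : M.det * M.det = 1 := by linarith
  rcases Int.isUnit_iff.mp (IsUnit.of_mul_eq_one _ h2) with h | h <;> [left; right] <;> exact h

lemma dcol_mulVec (V : Matrix (Fin 2) (Fin 2) ℤ) (u v : Fin 2 → ℤ) :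
    dcol (V.mulVec u) (V.mulVec v) = V.det * dcol u v := by
  simp [dcol, Matrix.mulVec, dotProduct, Fin.sum_univ_two, Matrix.det_fin_two]
  ring

/-- For every `M ∈ Sp₄(ℤ)`: (i) `det(φ(M)) = ν(M)²`; (ii) the entries of
`φ(M)` have gcd `1`; (iii) if `M̃ = ((U,B),(0,(Uᵀ)⁻¹)) ∈ Sp₄(ℤ)` with `U ∈ GL₂(ℤ)`, then
`φ(M̃·M) = det(U)·φ(M)` and `ν(M̃·M) = det(U)·ν(M)`. -/
theorem phi_nu_properties (M : Matrix Idx Idx ℤ) (hM : IsSp4 M) :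
    (phi M).det = (nu M) ^ 2 ∧
    Int.gcd (Int.gcd (phi M 0 0) (phi M 0 1)) (Int.gcd (phi M 1 0) (phi M 1 1)) = 1 ∧
    ∀ U B : Matrix (Fin 2) (Fin 2) ℤ, IsUnit U.det →
      IsSp4 (Matrix.fromBlocks U B 0 (Uᵀ)⁻¹) →
      phi (Matrix.fromBlocks U B 0 (Uᵀ)⁻¹ * M) = U.det • phi M ∧
      nu (Matrix.fromBlocks U B 0 (Uᵀ)⁻¹ * M) = U.det * nu M := by
  have hM' := sp4_other hM
  have hsym := congrFun (congrFun hM' (Sum.inr 0)) (Sum.inr 1)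
  simp [Jp, Matrix.mul_apply, Fintype.sum_sum_type, Fin.sum_univ_two, Matrix.fromBlocks,
    Matrix.transpose_apply] at hsym
  -- Part (i)
  have part1 : (phi M).det = (nu M) ^ 2 := by
    simp only [phi, nu, dcol, Matrix.det_fin_two, Matrix.toBlocks₂₁, Matrix.toBlocks₂₂,
      Matrix.of_apply, Matrix.cons_val', Matrix.cons_val_zero, Matrix.cons_val_one,
      Matrix.head_cons, Matrix.empty_val', Matrix.cons_val_fin_one, Matrix.head_fin_const]
    linear_combination -(M (Sum.inr 0) (Sum.inl 0) * M (Sum.inr 1) (Sum.inr 0)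
      - M (Sum.inr 1) (Sum.inl 0) * M (Sum.inr 0) (Sum.inr 0)) * hsym
  refine ⟨part1, ?_, ?_⟩
  · -- Part (ii)
    have key : M.det =
        (M (.inl 0) (.inr 0) * M (.inl 1) (.inr 1) - M (.inl 0) (.inr 1) * M (.inl 1) (.inr 0)) * phi M 1 0
      + (M (.inl 0) (.inl 1) * M (.inl 1) (.inr 0) - M (.inl 0) (.inr 0) * M (.inl 1) (.inl 1)) * phi M 0 0
      + (M (.inl 0) (.inl 0) * M (.inl 1) (.inl 1) - M (.inl 0) (.inl 1) * M (.inl 1) (.inl 0)) * phi M 0 1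
      - (M (.inl 0) (.inl 0) * M (.inl 1) (.inr 1) - M (.inl 0) (.inr 1) * M (.inl 1) (.inl 0)) * phi M 1 1
      + ((M (.inl 0) (.inl 0) * M (.inl 1) (.inr 0) - M (.inl 0) (.inr 0) * M (.inl 1) (.inl 0))
        - (M (.inl 0) (.inl 1) * M (.inl 1) (.inr 1) - M (.inl 0) (.inr 1) * M (.inl 1) (.inl 1))) * nu M := by
      rw [laplace M]
      simp only [phi, nu, dcol, Matrix.det_fin_two, Matrix.toBlocks₂₁, Matrix.toBlocks₂₂,
        Matrix.of_apply, Matrix.cons_val', Matrix.cons_val_zero, Matrix.cons_val_one,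
        Matrix.head_cons, Matrix.empty_val', Matrix.cons_val_fin_one, Matrix.head_fin_const]
      linear_combination -(M (Sum.inl 0) (Sum.inl 0) * M (Sum.inl 1) (Sum.inr 0)
        - M (Sum.inl 0) (Sum.inr 0) * M (Sum.inl 1) (Sum.inl 0)) * hsym
    set G : ℕ := Int.gcd (Int.gcd (phi M 0 0) (phi M 0 1)) (Int.gcd (phi M 1 0) (phi M 1 1)) with hG
    have hd00 : (G : ℤ) ∣ phi M 0 0 := (Int.gcd_dvd_left _ _).trans (Int.gcd_dvd_left _ _)
    have hd01 : (G : ℤ) ∣ phi M 0 1 := (Int.gcd_dvd_left _ _).trans (Int.gcd_dvd_right _ _)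
    have hd10 : (G : ℤ) ∣ phi M 1 0 := (Int.gcd_dvd_right _ _).trans (Int.gcd_dvd_left _ _)
    have hd11 : (G : ℤ) ∣ phi M 1 1 := (Int.gcd_dvd_right _ _).trans (Int.gcd_dvd_right _ _)
    -- gcd(G, ν) = 1
    set H : ℕ := Int.gcd (G : ℤ) (nu M) with hH
    have hHG : (H : ℤ) ∣ (G : ℤ) := Int.gcd_dvd_left _ _
    have hHnu : (H : ℤ) ∣ nu M := Int.gcd_dvd_right _ _
    have hHdet : (H : ℤ) ∣ M.det := by
      rw [key]
      exact dvd_add (dvd_sub (dvd_add (dvd_add ((hHG.trans hd10).mul_left _)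
        ((hHG.trans hd00).mul_left _)) ((hHG.trans hd01).mul_left _))
        ((hHG.trans hd11).mul_left _)) (hHnu.mul_left _)
    have hH1 : H = 1 := by
      have h1 : (H : ℤ) ∣ 1 := by
        rcases sp4_det hM with h | h
        · rwa [h] at hHdet
        · rw [h] at hHdet; exact (dvd_neg).mp hHdet
      exact Nat.dvd_one.mp (Int.natCast_dvd_natCast.mp (by exact_mod_cast h1))
    have hcop : IsCoprime (G : ℤ) (nu M) := Int.isCoprime_iff_gcd_eq_one.mpr hH1
    have hcop2 : IsCoprime (G : ℤ) (nu M ^ 2) := hcop.pow_right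
    have hGdet : (G : ℤ) ∣ nu M ^ 2 := by
      rw [← part1, Matrix.det_fin_two]
      exact dvd_sub (hd00.mul_right _) (hd01.mul_right _)
    obtain ⟨u, v, huv⟩ := hcop2
    have hG1 : (G : ℤ) ∣ 1 := by
      rw [← huv]
      exact dvd_add (Dvd.dvd.mul_left dvd_rfl u) (hGdet.mul_left v)
    exact Nat.dvd_one.mp (Int.natCast_dvd_natCast.mp (by exact_mod_cast hG1))
  · -- Part (iii)
    intro U B hU _
    have hUT : IsUnit (Uᵀ).det := by rwa [Matrix.det_transpose]
    have hVd : ((Uᵀ)⁻¹).det = U.det := by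
      have h1 : (Uᵀ).det * ((Uᵀ)⁻¹).det = 1 := by
        rw [Matrix.det_nonsing_inv, Ring.mul_inverse_cancel _ hUT]
      rw [Matrix.det_transpose] at h1
      rcases Int.isUnit_iff.mp hU with h | h <;> rw [h] at h1 ⊢ <;> linarith
    have hC : (Matrix.fromBlocks U B 0 (Uᵀ)⁻¹ * M).toBlocks₂₁ = (Uᵀ)⁻¹ * M.toBlocks₂₁ := by
      conv_lhs => rw [← Matrix.fromBlocks_toBlocks M]
      rw [Matrix.fromBlocks_multiply]
      simp
    have hD : (Matrix.fromBlocks U B 0 (Uᵀ)⁻¹ * M).toBlocks₂₂ = (Uᵀ)⁻¹ * M.toBlocks₂₂ := by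
      conv_lhs => rw [← Matrix.fromBlocks_toBlocks M]
      rw [Matrix.fromBlocks_multiply]
      simp
    have col : ∀ (N : Matrix (Fin 2) (Fin 2) ℤ) (j : Fin 2),
        (fun i => ((Uᵀ)⁻¹ * N) i j) = ((Uᵀ)⁻¹).mulVec (fun i => N i j) := by
      intro N j
      funext i
      simp [Matrix.mul_apply, Matrix.mulVec, dotProduct]
    constructor
    · ext i j
      fin_cases i <;> fin_cases j <;>
        simp only [phi, hC, hD, col, dcol_mulVec, Matrix.det_mul, hVd, Matrix.smul_apply,
          Matrix.cons_val', Matrix.cons_val_zero, Matrix.cons_val_one, Matrix.head_cons,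
          Matrix.empty_val', Matrix.cons_val_fin_one, Matrix.head_fin_const, smul_eq_mul,
          Matrix.of_apply] <;> rfl
    · simp only [nu, hC, hD, col, dcol_mulVec, hVd]
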